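/- Let θ be a linear order on ℤ in which both odd and even numbers appear monotonically increasing. In ℤ^2, the total order construction path from the origin o to q' = (2n, 4n) using any shifted copy θ' of θ (θ' also has odds and evens monotone increasing) passes through the point (2n, 2n); moreover, the last 2n steps of the path are all in the x_2 direction. -/

import Mathlib

open scoped Classical

/-- One step of the total order construction in `ℤ²` for the positive quadrant:
from the point `m`, step in the `x₁` direction if `m.1 + m.2` is among the
`q.1 - p.1` smallest elements (w.r.t. `r`) of the interval
`[p.1 + p.2, q.1 + q.2 - 1]`, and otherwise step in the `x₂` direction. -/
noncomputable def step2 (r : ℤ → ℤ → Prop) (p q m : ℤ × ℤ) : ℤ × ℤ :=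
  if ((Finset.Icc (p.1 + p.2) (q.1 + q.2 - 1)).filter
      (fun y => r y (m.1 + m.2))).card < (q.1 - p.1).toNat
  then (m.1 + 1, m.2) else (m.1, m.2 + 1)

/-- The point visited after `j` steps of the total order construction path
from `p` towards `q` generated by the order `r`. -/
noncomputable def path2 (r : ℤ → ℤ → Prop) (p q : ℤ × ℤ) : ℕ → ℤ × ℤ
  | 0 => p
  | j + 1 => step2 r p q (path2 r p q j)

/-
Along the path the coordinate sum after `j` steps is `j`, so the `j`-th step goes in the `x₁`
direction iff `j` is among the `2n` smallest elements of `[0, 6n - 1]` for `r`. An `s ≥ 4n`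
has the `2n` numbers `s - 2, s - 4, …, s - 4n` of its parity below it, so it is not among them.
Hence the `2n` steps in the `x₁` direction are all taken during the first `4n` steps.
-/

open Finset

section RelRank

variable {α : Type*} {r : α → α → Prop} {T : Finset α}

noncomputable def relRank (r : α → α → Prop) (T : Finset α) (a : α) : ℕ :=
  #(T.filter (fun y => r y a))

lemma relRank_lt_relRank [IsTrans α r] [Std.Irrefl r] {a b : α} (ha : a ∈ T) (hab : r a b) :
    relRank r T a < relRank r T b := by
  have hsub : insert a (T.filter (fun y => r y a)) ⊆ T.filter (fun y => r y b) := by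
    intro y hy
    rcases mem_insert.mp hy with rfl | hy
    · exact mem_filter.mpr ⟨ha, hab⟩
    · obtain ⟨hyT, hya⟩ := mem_filter.mp hy
      exact mem_filter.mpr ⟨hyT, _root_.trans hya hab⟩
  have hnotMem : a ∉ T.filter (fun y => r y a) := fun hmem =>
    irrefl a (mem_filter.mp hmem).2
  simpa [relRank, card_insert_of_notMem hnotMem] using card_le_card hsub

lemma relRank_injOn [IsStrictTotalOrder α r] : Set.InjOn (relRank r T) T := by
  intro a ha b hb hab
  rcases trichotomous_of r a b with hlt | heq | hgt
  · exact absurd hab (relRank_lt_relRank ha hlt).ne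
  · exact heq
  · exact absurd hab (relRank_lt_relRank hb hgt).ne'

lemma relRank_lt_card [Std.Irrefl r] {a : α} (ha : a ∈ T) : relRank r T a < #T := by
  have hsub : T.filter (fun y => r y a) ⊆ T.erase a := fun y hy =>
    mem_erase.mpr ⟨fun e => irrefl a (e ▸ (mem_filter.mp hy).2), (mem_filter.mp hy).1⟩
  exact (card_le_card hsub).trans_lt (card_erase_lt_of_mem ha)

lemma image_relRank [IsStrictTotalOrder α r] : T.image (relRank r T) = range #T := by
  refine eq_of_subset_of_card_le (fun x hx => ?_) ?_
  · obtain ⟨a, ha, rfl⟩ := mem_image.mp hx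
    exact mem_range.mpr (relRank_lt_card ha)
  · rw [card_range, card_image_of_injOn relRank_injOn]

lemma card_filter_relRank_lt [IsStrictTotalOrder α r] {k : ℕ} (hk : k ≤ #T) :
    #(T.filter (fun a => relRank r T a < k)) = k := by
  have himage : (T.filter (fun a => relRank r T a < k)).image (relRank r T) = range k := by
    rw [← filter_image (p := fun x => x < k), image_relRank (r := r)]
    ext x
    simp only [mem_filter, mem_range]
    omega
  rw [← card_image_of_injOn ((relRank_injOn (r := r)).mono (filter_subset _ _)), himage, card_range]

lemma le_relRank_Icc_of_parity_mono {r : ℤ → ℤ → Prop}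
    (hmono : ∀ a b : ℤ, a < b → a % 2 = b % 2 → r a b)
    {a b s : ℤ} {k : ℕ} (has : a + 2 * k ≤ s) (hsb : s ≤ b + 2) :
    k ≤ relRank r (Icc a b) s := by
  have hmaps : ∀ i ∈ range k, s - 2 * ((i : ℤ) + 1) ∈ (Icc a b).filter (fun y => r y s) := by
    intro i hi
    have hik : (i : ℤ) < k := by exact_mod_cast mem_range.mp hi
    exact mem_filter.mpr ⟨mem_Icc.mpr ⟨by omega, by omega⟩, hmono _ _ (by omega) (by omega)⟩
  simpa [relRank] using card_le_card_of_injOn _ hmaps (fun i _ j _ hij => by omega)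

end RelRank

section Path

variable {r : ℤ → ℤ → Prop} {p q : ℤ × ℤ}

abbrev IsFstStep (r : ℤ → ℤ → Prop) (p q : ℤ × ℤ) (s : ℤ) : Prop :=
  relRank r (Icc (p.1 + p.2) (q.1 + q.2 - 1)) s < (q.1 - p.1).toNat

lemma path2_fst_add_snd (j : ℕ) : (path2 r p q j).1 + (path2 r p q j).2 = p.1 + p.2 + j := by
  induction j with
  | zero => simp [path2]
  | succ j ih =>
    simp only [path2, step2]
    split_ifs <;> simp only at ih ⊢ <;> push_cast <;> linarith

lemma path2_succ_of_isFstStep {j : ℕ} (hj : IsFstStep r p q (p.1 + p.2 + j)) :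
    path2 r p q (j + 1) = ((path2 r p q j).1 + 1, (path2 r p q j).2) := by
  rw [path2, step2, path2_fst_add_snd]
  exact if_pos hj

lemma path2_succ_of_not_isFstStep {j : ℕ} (hj : ¬ IsFstStep r p q (p.1 + p.2 + j)) :
    path2 r p q (j + 1) = ((path2 r p q j).1, (path2 r p q j).2 + 1) := by
  rw [path2, step2, path2_fst_add_snd]
  exact if_neg hj

lemma path2_eq (j : ℕ) :
    path2 r p q j =
      (p.1 + #((Ico (p.1 + p.2) (p.1 + p.2 + j)).filter (IsFstStep r p q)),
        p.2 + j - #((Ico (p.1 + p.2) (p.1 + p.2 + j)).filter (IsFstStep r p q))) := by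
  induction j with
  | zero => simp [path2]
  | succ j ih =>
    have hIco : Ico (p.1 + p.2) (p.1 + p.2 + (j + 1 : ℕ)) =
        insert (p.1 + p.2 + j) (Ico (p.1 + p.2) (p.1 + p.2 + j)) := by
      rw [insert_Ico_right_eq_Ico_add_one (by omega)]
      push_cast
      ring_nf
    by_cases hj : IsFstStep r p q (p.1 + p.2 + j)
    · rw [path2_succ_of_isFstStep hj, ih, hIco, filter_insert, if_pos hj,
        card_insert_of_notMem (by simp)]
      simp only [Prod.mk.injEq]
      push_cast
      constructor <;> ring
    · rw [path2_succ_of_not_isFstStep hj, ih, hIco, filter_insert, if_neg hj]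
      simp only [Prod.mk.injEq, true_and]
      push_cast
      ring

lemma card_filter_isFstStep [IsStrictTotalOrder ℤ r] (h₂ : p.2 ≤ q.2) :
    #((Icc (p.1 + p.2) (q.1 + q.2 - 1)).filter (IsFstStep r p q)) = (q.1 - p.1).toNat :=
  card_filter_relRank_lt (by rw [Int.card_Icc]; omega)

end Path

theorem stmt_12_general (r : ℤ → ℤ → Prop) (h : IsStrictTotalOrder ℤ r)
    (hmono : ∀ a b : ℤ, a < b → a % 2 = b % 2 → r a b)
    (n : ℕ) :
    path2 r (0, 0) ((2 * n : ℤ), (4 * n : ℤ)) (4 * n) = ((2 * n : ℤ), (2 * n : ℤ)) ∧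
    ∀ j : ℕ, 4 * n ≤ j → j < 6 * n →
      path2 r (0, 0) ((2 * n : ℤ), (4 * n : ℤ)) (j + 1) =
        ((path2 r (0, 0) ((2 * n : ℤ), (4 * n : ℤ)) j).1,
         (path2 r (0, 0) ((2 * n : ℤ), (4 * n : ℤ)) j).2 + 1) := by
  have hlate : ∀ s : ℤ, 4 * n ≤ s → s < 6 * n → ¬ IsFstStep r (0, 0) (2 * n, 4 * n) s := by
    intro s hs₄ hs₆ hs
    simp only [IsFstStep, add_zero, sub_zero] at hs
    have := le_relRank_Icc_of_parity_mono (r := r) (a := 0) (b := 2 * n + 4 * n - 1) (s := s)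
      (k := 2 * n) hmono (by push_cast; omega) (by omega)
    omega
  have hcount : #((Ico 0 (4 * n : ℤ)).filter (IsFstStep r (0, 0) (2 * n, 4 * n))) = 2 * n := by
    have htotal := card_filter_isFstStep (r := r) (p := (0, 0)) (q := (2 * n, 4 * n)) (by simp)
    simp only [add_zero, sub_zero] at htotal
    rw [← Int.toNat_natCast (2 * n), Nat.cast_mul, Nat.cast_ofNat, ← htotal]
    congr 1
    ext s
    simp only [mem_filter, mem_Ico, mem_Icc]
    constructor
    · rintro ⟨⟨hs₀, hs₄⟩, hs⟩
      exact ⟨⟨hs₀, by omega⟩, hs⟩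
    · rintro ⟨⟨hs₀, hs₆⟩, hs⟩
      exact ⟨⟨hs₀, not_le.mp fun hs₄ => hlate s hs₄ (by omega) hs⟩, hs⟩
  refine ⟨?_, fun j hj₁ hj₂ => path2_succ_of_not_isFstStep (hlate _ (by omega) (by omega))⟩
  rw [path2_eq]
  simp only [add_zero, zero_add, Nat.cast_mul, Nat.cast_ofNat, hcount, Prod.mk.injEq]
  exact ⟨by push_cast, by ring⟩

theorem stmt_12 (r : ℤ → ℤ → Prop) (h : IsStrictTotalOrder ℤ r)
    (hmono : ∀ a b : ℤ, a < b → a % 2 = b % 2 → r a b)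
    (n : ℕ) (hn : 1 ≤ n) :
    path2 r (0, 0) ((2 * n : ℤ), (4 * n : ℤ)) (4 * n) = ((2 * n : ℤ), (2 * n : ℤ)) ∧
    ∀ j : ℕ, 4 * n ≤ j → j < 6 * n →
      path2 r (0, 0) ((2 * n : ℤ), (4 * n : ℤ)) (j + 1) =
        ((path2 r (0, 0) ((2 * n : ℤ), (4 * n : ℤ)) j).1,
         (path2 r (0, 0) ((2 * n : ℤ), (4 * n : ℤ)) j).2 + 1) :=
  stmt_12_general r h hmono n
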